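/- (Theorem 5, monotone comparison form) Let Ȳ_0, Ȳ_1, …, Ȳ_k, V be independent with Ȳ_i ~ N(μ_i, σ²/n_i) and V ~ χ²_ν, and set S = σ√(V/ν). Let μ̂_j = μ̂_j(Ȳ_1,…,Ȳ_k) be the SDMMSA estimates with weights n_1,…,n_k. Fix i ∈ [1,k], δ ≥ 0 and nonnegative constants c_1,…,c_i, and let R_{c_1,…,c_i} = ∪_{j=1}^{i} {(μ̂_j − Ȳ_0 − δ)/S > c_j}. Then P_{(μ_0,μ_1,…,μ_k)}(R_{c_1,…,c_i}) is nondecreasing in each μ_j (j ∈ [1,k]) when μ_0, the other μ_{j'} and σ are held fixed; consequently, for any monotone configuration μ_1 ≤ … ≤ μ_k with μ_i ≤ μ_0 + δ, P_{(μ_0,μ_1,…,μ_k)}(R_{c_1,…,c_i}) ≤ P_{(μ_0,μ'_1,…,μ'_k)}(R_{c_1,…,c_i}), where μ'_j = μ_0 + δ for j ≤ i and μ'_j = max(μ_j, μ_0 + δ) for j > i. -/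

import Mathlib

open Finset

noncomputable section SDMMSA

/-- Pooled weight `n_{i,j} = ∑_{h=i}^j n_h`. -/
def pooledWeight (n : ℕ → ℝ) (i j : ℕ) : ℝ := ∑ h ∈ Finset.Icc i j, n h

/-- Pooled (weighted) mean `Ȳ_{i,j} = (∑_{h=i}^j n_h Y_h) / n_{i,j}`. -/
def pooledMean (n Y : ℕ → ℝ) (i j : ℕ) : ℝ :=
  (∑ h ∈ Finset.Icc i j, n h * Y h) / pooledWeight n i j

/-- The first SDMMSA index for the data `(Y_1,n_1),…,(Y_t,n_t)`:
the smallest `j ∈ [1,t]` at which `Ȳ_{j,t} = max_{1 ≤ j' ≤ t} Ȳ_{j',t}`. -/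
def firstIdx (n Y : ℕ → ℝ) (t : ℕ) : ℕ :=
  sInf {j | 1 ≤ j ∧ j ≤ t ∧ ∀ j', 1 ≤ j' → j' ≤ t → pooledMean n Y j' t ≤ pooledMean n Y j t}

/-- Fuel-based recursion implementing the SDMMSA step-down procedure: on data range `[1,t]`,
every `i ≥ i₁ = firstIdx n Y t` gets the pooled mean `Ȳ_{i₁,t}` of the top block, and for
`i < i₁` we recurse on the data range `[1, i₁ - 1]`.  A fuel of `t` suffices since the
range shrinks strictly at each step. -/
def sdmmsaAux (n Y : ℕ → ℝ) : ℕ → ℕ → ℕ → ℝ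
  | 0, _, _ => 0
  | fuel + 1, t, i =>
      if firstIdx n Y t ≤ i then pooledMean n Y (firstIdx n Y t) t
      else sdmmsaAux n Y fuel (firstIdx n Y t - 1) i

/-- `muhat n Y k i` is the SDMMSA estimate `μ̂_i` computed from the data
`(Y_1,n_1),…,(Y_k,n_k)`. -/
def muhat (n Y : ℕ → ℝ) (k i : ℕ) : ℝ := sdmmsaAux n Y k k i

/-- The SDMMSA indices `i_u` computed from the data `(Y_1,n_1),…,(Y_k,n_k)`:
`sdIdx n Y k 0 = i_0 = k+1` and `i_{u+1}` is the first SDMMSA index of `[1, i_u - 1]`. -/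
def sdIdx (n Y : ℕ → ℝ) (k : ℕ) : ℕ → ℕ
  | 0 => k + 1
  | u + 1 => firstIdx n Y (sdIdx n Y k u - 1)

/-- The number of steps `h` of the SDMMSA: the first `u` with `i_u = 1`. -/
def sdSteps (n Y : ℕ → ℝ) (k : ℕ) : ℕ := sInf {u | sdIdx n Y k u = 1}

end SDMMSA

open MeasureTheory ProbabilityTheory

noncomputable section

/-- The chi-squared distribution with `ν` degrees of freedom: the Gamma distribution with
shape `ν/2` and rate `1/2`. -/
def chiSquared (ν : ℕ) : Measure ℝ := gammaMeasure ((ν : ℝ) / 2) (1 / 2)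

/-- The joint law of `(Ȳ_0, (Ȳ_1,…,Ȳ_k), V)`: independent coordinates with
`Ȳ_0 ~ N(μ_0, σ²/n_0)`, `Ȳ_j ~ N(μ_j, σ²/n_j)` (coordinate `v : Fin k` carrying
`Ȳ_{v+1}`) and `V ~ χ²_ν`. -/
def jointLaw (k ν : ℕ) (n0 : ℝ) (n : ℕ → ℝ) (σ μ0 : ℝ) (μ : ℕ → ℝ) :
    Measure (ℝ × (Fin k → ℝ) × ℝ) :=
  (gaussianReal μ0 ((σ ^ 2 / n0).toNNReal)).prod
    ((Measure.pi fun v : Fin k =>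
        gaussianReal (μ ((v : ℕ) + 1)) ((σ ^ 2 / n ((v : ℕ) + 1)).toNNReal)).prod
      (chiSquared ν))

/-- The step-up rejection region `R_{c_1,…,c_i} = ∪_{j=1}^{i} {(μ̂_j - Ȳ_0 - δ)/S > c_j}`,
where `μ̂_j` is the SDMMSA estimate computed from `(Ȳ_1,…,Ȳ_k)` and `S = σ√(V/ν)`. -/
def stepUpRegion (k ν : ℕ) (n : ℕ → ℝ) (σ δ : ℝ) (i : ℕ) (c : ℕ → ℝ) :
    Set (ℝ × (Fin k → ℝ) × ℝ) :=
  {p | ∃ j, 1 ≤ j ∧ j ≤ i ∧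
    c j < (muhat n (fun t => if h : t - 1 < k then p.2.1 ⟨t - 1, h⟩ else 0) k j
            - p.1 - δ) / (σ * Real.sqrt (p.2.2 / ν))}

/-!
The SDMMSA estimate satisfies the min–max formula `μ̂_i = min_{i ≤ b ≤ k} max_{1 ≤ s ≤ b} Ȳ_{s,b}`,
so it is a nondecreasing function of the data `(Ȳ_1, …, Ȳ_k)`, and hence so is the indicator of
`R_{c_1,…,c_i}`. Raising the means `μ_j` amounts to translating the coordinates `Ȳ_j`: the
translation pushes the law at `μ` forward to the law at `μ' ≥ μ` and maps `R` into itself, so `R`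
is at least as likely under `μ'`. The comparison with the least favourable configuration is the
special case where every mean is raised at once.
-/

section PooledMean

variable {n : ℕ → ℝ} (Y : ℕ → ℝ)

lemma pooledWeight_pos {i j : ℕ} (hij : i ≤ j) (hn : ∀ h, i ≤ h → h ≤ j → 0 < n h) :
    0 < pooledWeight n i j :=
  sum_pos (fun h hh => hn h (mem_Icc.1 hh).1 (mem_Icc.1 hh).2) (nonempty_Icc.2 hij)

lemma sum_Icc_consecutive (f : ℕ → ℝ) {i b j : ℕ} (hib : i ≤ b + 1) (hbj : b ≤ j) :
    ∑ h ∈ Icc i b, f h + ∑ h ∈ Icc (b + 1) j, f h = ∑ h ∈ Icc i j, f h := by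
  simp only [← Finset.Ico_add_one_right_eq_Icc]
  exact sum_Ico_consecutive f hib (by omega)

lemma pooledMean_mul_pooledWeight {i j : ℕ} (hij : i ≤ j) (hn : ∀ h, i ≤ h → h ≤ j → 0 < n h) :
    pooledMean n Y i j * pooledWeight n i j = ∑ h ∈ Icc i j, n h * Y h :=
  div_mul_cancel₀ _ (pooledWeight_pos hij hn).ne'

/-- The weighted-average identity `Ȳ_{i,j} n_{i,j} = Ȳ_{i,b} n_{i,b} + Ȳ_{b+1,j} n_{b+1,j}`,
rearranged. -/
lemma pooledMean_split {i b j : ℕ} (hib : i ≤ b) (hbj : b < j)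
    (hn : ∀ h, i ≤ h → h ≤ j → 0 < n h) :
    (pooledMean n Y i j - pooledMean n Y i b) * pooledWeight n i b =
      (pooledMean n Y (b + 1) j - pooledMean n Y i j) * pooledWeight n (b + 1) j := by
  have hsum := sum_Icc_consecutive (fun h => n h * Y h) (i := i) (b := b) (j := j)
    (by omega) hbj.le
  have hweight : pooledWeight n i b + pooledWeight n (b + 1) j = pooledWeight n i j :=
    sum_Icc_consecutive n (by omega) hbj.le
  rw [← pooledMean_mul_pooledWeight Y hib (fun h h1 h2 => hn h h1 (by omega)),
    ← pooledMean_mul_pooledWeight Y (by omega : b + 1 ≤ j) (fun h h1 h2 => hn h (by omega) h2),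
    ← pooledMean_mul_pooledWeight Y (by omega) hn] at hsum
  linear_combination pooledMean n Y i j * hweight - hsum

lemma pooledMean_le_left_of_right_le {i b j : ℕ} (hib : i ≤ b) (hbj : b < j)
    (hn : ∀ h, i ≤ h → h ≤ j → 0 < n h)
    (hright : pooledMean n Y (b + 1) j ≤ pooledMean n Y i j) :
    pooledMean n Y i j ≤ pooledMean n Y i b := by
  have hsplit := pooledMean_split Y hib hbj hn
  have hleft := pooledWeight_pos hib fun h h1 h2 => hn h h1 (by omega)
  have hright' := pooledWeight_pos (by omega : b + 1 ≤ j) fun h h1 h2 => hn h (by omega) h2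
  nlinarith

lemma pooledMean_left_le_of_le_right {i b j : ℕ} (hib : i ≤ b) (hbj : b < j)
    (hn : ∀ h, i ≤ h → h ≤ j → 0 < n h)
    (hright : pooledMean n Y i j ≤ pooledMean n Y (b + 1) j) :
    pooledMean n Y i b ≤ pooledMean n Y i j := by
  have hsplit := pooledMean_split Y hib hbj hn
  have hleft := pooledWeight_pos hib fun h h1 h2 => hn h h1 (by omega)
  have hright' := pooledWeight_pos (by omega : b + 1 ≤ j) fun h h1 h2 => hn h (by omega) h2
  nlinarith

lemma pooledMean_mono {Y' : ℕ → ℝ} {s b : ℕ} (hsb : s ≤ b) (hn : ∀ h, s ≤ h → h ≤ b → 0 < n h)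
    (hY : ∀ h, s ≤ h → h ≤ b → Y h ≤ Y' h) :
    pooledMean n Y s b ≤ pooledMean n Y' s b := by
  refine div_le_div_of_nonneg_right (sum_le_sum fun h hh => ?_) (pooledWeight_pos hsb hn).le
  obtain ⟨h1, h2⟩ := mem_Icc.1 hh
  exact mul_le_mul_of_nonneg_left (hY h h1 h2) (hn h h1 h2).le

end PooledMean

section FirstIdx

variable (n Y : ℕ → ℝ) {t : ℕ}

lemma firstIdx_spec (ht : 1 ≤ t) :
    1 ≤ firstIdx n Y t ∧ firstIdx n Y t ≤ t ∧
      ∀ j, 1 ≤ j → j ≤ t → pooledMean n Y j t ≤ pooledMean n Y (firstIdx n Y t) t := by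
  obtain ⟨b, hb, hmax⟩ := exists_max_image (Icc 1 t) (fun j => pooledMean n Y j t)
    ⟨1, mem_Icc.2 ⟨le_rfl, ht⟩⟩
  exact Nat.sInf_mem (s := {j | 1 ≤ j ∧ j ≤ t ∧
    ∀ j', 1 ≤ j' → j' ≤ t → pooledMean n Y j' t ≤ pooledMean n Y j t})
    ⟨b, (mem_Icc.1 hb).1, (mem_Icc.1 hb).2, fun j h1 h2 => hmax j (mem_Icc.2 ⟨h1, h2⟩)⟩

variable {n}

lemma pooledMean_firstIdx_le (ht : 1 ≤ t) (hn : ∀ h, 1 ≤ h → h ≤ t → 0 < n h) {b : ℕ}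
    (hab : firstIdx n Y t ≤ b) (hbt : b ≤ t) :
    pooledMean n Y (firstIdx n Y t) t ≤ pooledMean n Y (firstIdx n Y t) b := by
  obtain ⟨ha, -, hmax⟩ := firstIdx_spec n Y ht
  rcases hbt.eq_or_lt with rfl | hbt
  · exact le_rfl
  · exact pooledMean_le_left_of_right_le Y hab hbt (fun h h1 h2 => hn h (by omega) h2)
      (hmax (b + 1) (by omega) hbt)

lemma pooledMean_le_pooledMean_firstIdx (ht : 1 ≤ t) (hn : ∀ h, 1 ≤ h → h ≤ t → 0 < n h)
    {s : ℕ} (hs : 1 ≤ s) (hsa : s < firstIdx n Y t) :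
    pooledMean n Y s (firstIdx n Y t - 1) ≤ pooledMean n Y (firstIdx n Y t) t := by
  obtain ⟨-, hat, hmax⟩ := firstIdx_spec n Y ht
  have hsucc : firstIdx n Y t - 1 + 1 = firstIdx n Y t := by omega
  have hle := pooledMean_left_le_of_le_right Y (i := s) (b := firstIdx n Y t - 1) (j := t)
    (by omega) (by omega) (fun h h1 h2 => hn h (by omega) h2)
  rw [hsucc] at hle
  exact (hle (hmax s hs (by omega))).trans (hmax s hs (by omega))

end FirstIdx

section MinMax

variable {n : ℕ → ℝ} (Y : ℕ → ℝ)

lemma sdmmsaAux_le_exists_pooledMean (fuel : ℕ) : ∀ t i, t ≤ fuel → 1 ≤ i → i ≤ t →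
    (∀ h, 1 ≤ h → h ≤ t → 0 < n h) →
    ∀ b, i ≤ b → b ≤ t → ∃ s, 1 ≤ s ∧ s ≤ b ∧ sdmmsaAux n Y fuel t i ≤ pooledMean n Y s b := by
  induction fuel with
  | zero => intro t i ht hi hit; omega
  | succ fuel ih =>
    intro t i htf hi hit hn b hib hbt
    have ht : 1 ≤ t := hi.trans hit
    rw [sdmmsaAux]
    obtain ⟨ha, hat, -⟩ := firstIdx_spec n Y ht
    set a := firstIdx n Y t
    have hn' : ∀ h, 1 ≤ h → h ≤ a - 1 → 0 < n h := fun h h1 h2 => hn h h1 (by omega)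
    split_ifs with hai
    · exact ⟨a, ha, by omega, pooledMean_firstIdx_le Y ht hn (by omega) hbt⟩
    by_cases hb : b ≤ a - 1
    · exact ih (a - 1) i (by omega) hi (by omega) hn' b hib hb
    -- `b` lies in the top block `[a, t]`: pass through its pooled mean
    obtain ⟨s, hs, hsb, hle⟩ := ih (a - 1) i (by omega) hi (by omega) hn' (a - 1) (by omega) le_rfl
    refine ⟨a, ha, by omega, ?_⟩
    calc sdmmsaAux n Y fuel (a - 1) i
        ≤ pooledMean n Y s (a - 1) := hle
      _ ≤ pooledMean n Y a t := pooledMean_le_pooledMean_firstIdx Y ht hn hs (by omega)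
      _ ≤ pooledMean n Y a b := pooledMean_firstIdx_le Y ht hn (by omega) hbt

lemma exists_forall_pooledMean_le_sdmmsaAux (fuel : ℕ) : ∀ t i, t ≤ fuel → 1 ≤ i → i ≤ t →
    ∃ b, i ≤ b ∧ b ≤ t ∧ ∀ s, 1 ≤ s → s ≤ b → pooledMean n Y s b ≤ sdmmsaAux n Y fuel t i := by
  induction fuel with
  | zero => intro t i ht hi hit; omega
  | succ fuel ih =>
    intro t i htf hi hit
    obtain ⟨-, hat, hmax⟩ := firstIdx_spec n Y (hi.trans hit)
    rw [sdmmsaAux]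
    split_ifs with hai
    · exact ⟨t, hit, le_rfl, hmax⟩
    · obtain ⟨b, hib, hb, hle⟩ := ih (firstIdx n Y t - 1) i (by omega) hi (by omega)
      exact ⟨b, hib, by omega, hle⟩

variable {Y}

theorem muhat_mono {k i : ℕ} (hi : 1 ≤ i) (hik : i ≤ k) (hn : ∀ h, 1 ≤ h → h ≤ k → 0 < n h)
    {Y' : ℕ → ℝ} (hY : ∀ h, 1 ≤ h → h ≤ k → Y h ≤ Y' h) :
    muhat n Y k i ≤ muhat n Y' k i := by
  obtain ⟨b, hib, hbk, hupper⟩ := exists_forall_pooledMean_le_sdmmsaAux Y' k k i le_rfl hi hik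
  obtain ⟨s, hs, hsb, hlower⟩ := sdmmsaAux_le_exists_pooledMean Y k k i le_rfl hi hik hn b hib hbk
  refine hlower.trans (le_trans ?_ (hupper s hs hsb))
  exact pooledMean_mono Y hsb (fun h h1 h2 => hn h (by omega) (by omega))
    fun h h1 h2 => hY h (by omega) (by omega)

end MinMax

section Law

instance (ν : ℕ) : SFinite (chiSquared ν) := by
  unfold chiSquared gammaMeasure
  infer_instance

def shiftMeans (k : ℕ) (μ μ' : ℕ → ℝ) :
    ℝ × (Fin k → ℝ) × ℝ → ℝ × (Fin k → ℝ) × ℝ :=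
  Prod.map id (Prod.map (fun x v => x v + (μ' ((v : ℕ) + 1) - μ ((v : ℕ) + 1))) id)

lemma measurePreserving_shiftMeans (k ν : ℕ) (n0 : ℝ) (n : ℕ → ℝ) (σ μ0 : ℝ)
    (μ μ' : ℕ → ℝ) :
    MeasurePreserving (shiftMeans k μ μ')
      (jointLaw k ν n0 n σ μ0 μ) (jointLaw k ν n0 n σ μ0 μ') := by
  refine (MeasurePreserving.id _).prod
    ((measurePreserving_pi _ _ fun v => ⟨measurable_add_const _, ?_⟩).prod
      (MeasurePreserving.id _))
  rw [gaussianReal_map_add_const, add_sub_cancel]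

variable {k ν : ℕ} {n : ℕ → ℝ} {σ : ℝ} (δ : ℝ) {i : ℕ} (c : ℕ → ℝ)

lemma stepUpRegion_subset_preimage_shiftMeans (hn : ∀ h, 1 ≤ h → h ≤ k → 0 < n h)
    (hσ : 0 ≤ σ) (hik : i ≤ k) {μ μ' : ℕ → ℝ} (hμ : ∀ j, 1 ≤ j → j ≤ k → μ j ≤ μ' j) :
    stepUpRegion k ν n σ δ i c ⊆ shiftMeans k μ μ' ⁻¹' stepUpRegion k ν n σ δ i c := by
  rintro ⟨y0, y, v⟩ ⟨j, hj1, hji, hj⟩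
  -- this also holds when `S = 0`, where both quotients are `0`
  refine ⟨j, hj1, hji, hj.trans_le (div_le_div_of_nonneg_right ?_ (by positivity))⟩
  simp only [shiftMeans, Prod.map, id]
  gcongr
  refine muhat_mono hj1 (hji.trans hik) hn fun h h1 h2 => ?_
  have hh : h - 1 < k := by omega
  have hshift := hμ (h - 1 + 1) (by omega) (by omega)
  simp only [dif_pos hh]
  linarith

theorem jointLaw_stepUpRegion_mono (n0 μ0 : ℝ) (hn : ∀ h, 1 ≤ h → h ≤ k → 0 < n h)
    (hσ : 0 ≤ σ) (hik : i ≤ k) {μ μ' : ℕ → ℝ} (hμ : ∀ j, 1 ≤ j → j ≤ k → μ j ≤ μ' j) :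
    jointLaw k ν n0 n σ μ0 μ (stepUpRegion k ν n σ δ i c) ≤
      jointLaw k ν n0 n σ μ0 μ' (stepUpRegion k ν n σ δ i c) := by
  have hshift := measurePreserving_shiftMeans k ν n0 n σ μ0 μ μ'
  calc jointLaw k ν n0 n σ μ0 μ (stepUpRegion k ν n σ δ i c)
      ≤ jointLaw k ν n0 n σ μ0 μ (shiftMeans k μ μ' ⁻¹' stepUpRegion k ν n σ δ i c) :=
        measure_mono (stepUpRegion_subset_preimage_shiftMeans δ c hn hσ hik hμ)
    _ ≤ (jointLaw k ν n0 n σ μ0 μ).map (shiftMeans k μ μ') (stepUpRegion k ν n σ δ i c) :=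
        Measure.le_map_apply hshift.measurable.aemeasurable _
    _ = jointLaw k ν n0 n σ μ0 μ' (stepUpRegion k ν n σ δ i c) := by rw [hshift.map_eq]

end Law

theorem stepUpRegion_prob_monotone_general (k : ℕ) (ν : ℕ)
    (n0 : ℝ) (n : ℕ → ℝ) (hn : ∀ h, 1 ≤ h → h ≤ k → 0 < n h)
    (σ : ℝ) (hσ : 0 < σ) (δ : ℝ) (μ0 : ℝ)
    (i : ℕ) (hik : i ≤ k)
    (c : ℕ → ℝ) :
    (∀ j, 1 ≤ j → j ≤ k → ∀ μ μ' : ℕ → ℝ,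
      μ j ≤ μ' j → (∀ j', j' ≠ j → μ j' = μ' j') →
      jointLaw k ν n0 n σ μ0 μ (stepUpRegion k ν n σ δ i c) ≤
        jointLaw k ν n0 n σ μ0 μ' (stepUpRegion k ν n σ δ i c)) ∧
    (∀ μ : ℕ → ℝ, (∀ j j', 1 ≤ j → j ≤ j' → j' ≤ k → μ j ≤ μ j') → μ i ≤ μ0 + δ →
      jointLaw k ν n0 n σ μ0 μ (stepUpRegion k ν n σ δ i c) ≤
        jointLaw k ν n0 n σ μ0
          (fun j => if j ≤ i then μ0 + δ else max (μ j) (μ0 + δ))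
          (stepUpRegion k ν n σ δ i c)) := by
  refine ⟨fun j _ _ μ μ' hj hother => ?_, fun μ hmono hiδ => ?_⟩
  · refine jointLaw_stepUpRegion_mono δ c n0 μ0 hn hσ.le hik fun j' _ _ => ?_
    rcases eq_or_ne j' j with rfl | hj'
    · exact hj
    · exact (hother j' hj').le
  · refine jointLaw_stepUpRegion_mono δ c n0 μ0 hn hσ.le hik fun j hj1 hjk => ?_
    split_ifs with hji
    · exact (hmono j i hj1 hji hik).trans hiδ
    · exact le_max_left _ _

/-- Theorem 5, monotone comparison form: the probability of the step-up
rejection region `R_{c_1,…,c_i}` is nondecreasing in each `μ_j`, `j ∈ [1,k]` (with `μ_0`,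
the other means and `σ` fixed); consequently, for any monotone configuration
`μ_1 ≤ … ≤ μ_k` with `μ_i ≤ μ_0 + δ`, the probability is at most the one obtained at the
configuration `μ'_j = μ_0 + δ` for `j ≤ i` and `μ'_j = max(μ_j, μ_0 + δ)` for `j > i`. -/
theorem stepUpRegion_prob_monotone (k : ℕ) (hk : 1 ≤ k) (ν : ℕ) (hν : 1 ≤ ν)
    (n0 : ℝ) (hn0 : 0 < n0) (n : ℕ → ℝ) (hn : ∀ h, 1 ≤ h → h ≤ k → 0 < n h)
    (σ : ℝ) (hσ : 0 < σ) (δ : ℝ) (hδ : 0 ≤ δ) (μ0 : ℝ)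
    (i : ℕ) (hi1 : 1 ≤ i) (hik : i ≤ k)
    (c : ℕ → ℝ) (hc : ∀ j, 1 ≤ j → j ≤ i → 0 ≤ c j) :
    (∀ j, 1 ≤ j → j ≤ k → ∀ μ μ' : ℕ → ℝ,
      μ j ≤ μ' j → (∀ j', j' ≠ j → μ j' = μ' j') →
      jointLaw k ν n0 n σ μ0 μ (stepUpRegion k ν n σ δ i c) ≤
        jointLaw k ν n0 n σ μ0 μ' (stepUpRegion k ν n σ δ i c)) ∧
    (∀ μ : ℕ → ℝ, (∀ j j', 1 ≤ j → j ≤ j' → j' ≤ k → μ j ≤ μ j') → μ i ≤ μ0 + δ →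
      jointLaw k ν n0 n σ μ0 μ (stepUpRegion k ν n σ δ i c) ≤
        jointLaw k ν n0 n σ μ0
          (fun j => if j ≤ i then μ0 + δ else max (μ j) (μ0 + δ))
          (stepUpRegion k ν n σ δ i c)) :=
  stepUpRegion_prob_monotone_general k ν n0 n hn σ hσ δ μ0 i hik c
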